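/- Let K be a field, let V be a K-vector space, let c : V ⊗ V → V ⊗ V be a K-linear map with (c + id)(c − λ·id) = 0 for some λ ∈ K, and let b : V ⊗ V → V be a K-linear map. Let γ : V ⊗ V → T(V) be the linear map γ(z) = m(c(z)) − λ·m(z) − ι(b(z)) into the tensor algebra T(V), and let F := Im(γ). If F ∩ (K·1 + ι(V)) = 0, then b ∘ (c + id_{V⊗V}) = 0, i.e. b ∘ c = −b. -/
import Mathlib


open TensorProduct

noncomputable section

variable {K : Type*} [Field K] {V : Type*} [AddCommGroup V] [Module K V]

/-- The endomorphism `c ⊗ id_V` of `V ⊗ (V ⊗ V)` (transported along associativity). -/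
def opC1 (c : V ⊗[K] V →ₗ[K] V ⊗[K] V) :
    V ⊗[K] (V ⊗[K] V) →ₗ[K] V ⊗[K] (V ⊗[K] V) :=
  (TensorProduct.assoc K V V V).toLinearMap ∘ₗ
    LinearMap.rTensor V c ∘ₗ (TensorProduct.assoc K V V V).symm.toLinearMap

/-- The endomorphism `id_V ⊗ c` of `V ⊗ (V ⊗ V)`. -/
def opC2 (c : V ⊗[K] V →ₗ[K] V ⊗[K] V) :
    V ⊗[K] (V ⊗[K] V) →ₗ[K] V ⊗[K] (V ⊗[K] V) :=
  LinearMap.lTensor V c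

/-- The map `b ⊗ id_V : V ⊗ (V ⊗ V) → V ⊗ V`. -/
def opB1 (b : V ⊗[K] V →ₗ[K] V) :
    V ⊗[K] (V ⊗[K] V) →ₗ[K] V ⊗[K] V :=
  LinearMap.rTensor V b ∘ₗ (TensorProduct.assoc K V V V).symm.toLinearMap

/-- The map `id_V ⊗ b : V ⊗ (V ⊗ V) → V ⊗ V`. -/
def opB2 (b : V ⊗[K] V →ₗ[K] V) :
    V ⊗[K] (V ⊗[K] V) →ₗ[K] V ⊗[K] V :=
  LinearMap.lTensor V b

/-- The braid equation `c₁ ∘ c₂ ∘ c₁ = c₂ ∘ c₁ ∘ c₂`. -/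
def BraidEq (c : V ⊗[K] V →ₗ[K] V ⊗[K] V) : Prop :=
  opC1 c ∘ₗ opC2 c ∘ₗ opC1 c = opC2 c ∘ₗ opC1 c ∘ₗ opC2 c

/-- `c` is of Hecke type of mark `lam`: `(c + id) ∘ (c - lam • id) = 0`. -/
def IsHecke (lam : K) (c : V ⊗[K] V →ₗ[K] V ⊗[K] V) : Prop :=
  (c + LinearMap.id) ∘ₗ (c - lam • LinearMap.id) = 0

/-- `b` is a `c`-bracket: `c ∘ b₁ = b₂ ∘ c₁ ∘ c₂` and `c ∘ b₂ = b₁ ∘ c₂ ∘ c₁`. -/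
def IsBracket (c : V ⊗[K] V →ₗ[K] V ⊗[K] V) (b : V ⊗[K] V →ₗ[K] V) : Prop :=
  c ∘ₗ opB1 b = opB2 b ∘ₗ opC1 c ∘ₗ opC2 c ∧
  c ∘ₗ opB2 b = opB1 b ∘ₗ opC2 c ∘ₗ opC1 c

/-- The linear map `V ⊗ V → T(V)`, `v ⊗ w ↦ ι v * ι w`. -/
def tensMul : V ⊗[K] V →ₗ[K] TensorAlgebra K V :=
  LinearMap.mul' K (TensorAlgebra K V) ∘ₗ
    TensorProduct.map (TensorAlgebra.ι K) (TensorAlgebra.ι K)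

/-- The relation on `T(V)` whose associated ring quotient is
`U(V,c,b) = T(V)/(c(z) - lam•z - b(z) : z ∈ V ⊗ V)`. -/
def envRel (lam : K) (c : V ⊗[K] V →ₗ[K] V ⊗[K] V) (b : V ⊗[K] V →ₗ[K] V) :
    TensorAlgebra K V → TensorAlgebra K V → Prop :=
  fun x y => ∃ z : V ⊗[K] V,
    x = tensMul (c z) ∧ y = lam • tensMul z + TensorAlgebra.ι K (b z)

/-- The canonical map `ι_{c,b} : V → U(V,c,b)`. -/
def envIota (lam : K) (c : V ⊗[K] V →ₗ[K] V ⊗[K] V) (b : V ⊗[K] V →ₗ[K] V) :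
    V →ₗ[K] RingQuot (envRel lam c b) :=
  (RingQuot.mkAlgHom K (envRel lam c b)).toLinearMap ∘ₗ TensorAlgebra.ι K

/-- The q-integer `(n)_lam = 1 + lam + ⋯ + lam^(n-1)`. -/
def qInt (lam : K) (n : ℕ) : K := ∑ i ∈ Finset.range n, lam ^ i

/-- The q-factorial `(n)!_lam = (1)_lam (2)_lam ⋯ (n)_lam`. -/
def qFac (lam : K) (n : ℕ) : K := ∏ i ∈ Finset.range n, qInt lam (i + 1)


/-- **Lemma.**  Let `c` be of Hecke type of mark `lam`, let
`γ : V ⊗ V → T(V)`, `γ(z) = m(c z) - lam • m z - ι(b z)`, and `F := Im γ`.  If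
`F ∩ (K·1 + ι(V)) = 0` then `b ∘ (c + id) = 0`, i.e. `b ∘ c = -b`. -/
theorem bracket_anticommutes_of_range_inter_bot
    (lam : K) (c : V ⊗[K] V →ₗ[K] V ⊗[K] V) (hHecke : IsHecke lam c)
    (b : V ⊗[K] V →ₗ[K] V)
    (hF : LinearMap.range
        ((tensMul ∘ₗ c : V ⊗[K] V →ₗ[K] TensorAlgebra K V) -
          lam • (tensMul : V ⊗[K] V →ₗ[K] TensorAlgebra K V) -
          TensorAlgebra.ι K ∘ₗ b) ⊓
      (Submodule.span K {(1 : TensorAlgebra K V)} ⊔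
        LinearMap.range (TensorAlgebra.ι K : V →ₗ[K] TensorAlgebra K V)) = ⊥) :
    b ∘ₗ (c + LinearMap.id) = 0 := by
  apply LinearMap.ext; intro z
  have hH := congrArg (fun f => f z) hHecke
  simp only [LinearMap.comp_apply, LinearMap.add_apply, LinearMap.sub_apply,
    LinearMap.smul_apply, LinearMap.id_apply, LinearMap.zero_apply, map_sub, map_smul] at hH ⊢
  set u := c z + z with hu
  have hcu : c u = lam • u := by
    rw [hu, map_add, smul_add]
    have h2 : c (c z) = lam • c z - c z + lam • z := by linear_combination (norm := module) hH
    rw [h2]; module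
  set x := tensMul (c u) - lam • tensMul u - TensorAlgebra.ι K (b u) with hx
  have hx2 : x = - TensorAlgebra.ι K (b u) := by
    rw [hx, hcu, map_smul]; abel
  have hmem : x ∈ (⊥ : Submodule K (TensorAlgebra K V)) := by
    rw [← hF]
    constructor
    · exact ⟨u, by simp [hx]⟩
    · rw [hx2]
      exact Submodule.mem_sup_right (neg_mem ⟨b u, rfl⟩)
  rw [Submodule.mem_bot, hx2, neg_eq_zero] at hmem
  simpa using (TensorAlgebra.ι_eq_zero_iff (R := K) (b u)).mp hmem

end
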